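/- arXiv:2601.02562 — 4 statements merged into one kernel-verified Lean document; each statement's English description precedes it below -/
import Mathlib

section
/- Let E be a real inner product space, let f : E → ℝ be differentiable with gradient ∇f, let μ > 0 and L > 0 with μ ≤ L. Assume f is μ-strongly convex and ∇f is L-Lipschitz, and let θ* ∈ E satisfy ∇f(θ*) = 0. Then for every step size η with 0 < η ≤ 2/(μ+L) and every θ ∈ E, the gradient-descent update satisfies ‖(θ − η∇f(θ)) − θ*‖ ≤ (1 − ημ)‖θ − θ*‖; i.e., the gradient step map is a contraction with factor 1 − ημ toward the minimizer. -/
open scoped RealInnerProductSpace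

open AffineMap Set

/-! Put `g = ∇f - μ • id`, the gradient of the convex function `f - μ/2 ‖·‖²`. Lipschitz
continuity of `∇f` gives `⟪g x - g y, x - y⟫ ≤ (L - μ) ‖x - y‖²`, and for the gradient of a convex
function this one-sided bound upgrades to co-coercivity,
`‖g x - g y‖² ≤ (L - μ) ⟪g x - g y, x - y⟫` (Baillon–Haddad): compare the convexity lower bound
with the quadratic upper bound at the point `x - t (g x - g y)`. Since
`θ - η ∇f θ - θ* = (1 - ημ)(θ - θ*) - η (g θ - g θ*)`, expanding the square and using
co-coercivity together with `η (L - μ) ≤ 2 (1 - ημ)` gives the contraction. -/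

theorem le_mul_of_forall_quadratic_mul_le {ℓ a c : ℝ} (hℓ : 0 ≤ ℓ)
    (h : ∀ t : ℝ, (2 * t - ℓ * t ^ 2) * a ≤ c) : a ≤ ℓ * c := by
  rcases hℓ.eq_or_lt with rfl | hℓ
  · by_contra! ha
    rw [zero_mul] at ha
    have := h ((c + 1) / (2 * a))
    field_simp at this
    linarith
  · have := h ℓ⁻¹
    field_simp at this
    nlinarith

section Gradient

variable {E : Type*} [NormedAddCommGroup E] [InnerProductSpace ℝ E] {F : E → ℝ} {G : E → E}
  {ℓ : ℝ}

theorem hasDerivAt_comp_lineMap (hF : ∀ x, HasFDerivAt F (innerSL ℝ (G x) : E →L[ℝ] ℝ) x)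
    (x y : E) (t : ℝ) :
    HasDerivAt (fun t => F (lineMap x y t)) ⟪G (lineMap x y t), y - x⟫ t :=
  (hF _).comp_hasDerivAt t hasDerivAt_lineMap

theorem hasFDerivAt_sub_half_mul_norm_sq (hF : ∀ x, HasFDerivAt F (innerSL ℝ (G x) : E →L[ℝ] ℝ) x)
    (c : ℝ) (x : E) :
    HasFDerivAt (fun x => F x - c / 2 * ‖x‖ ^ 2) (innerSL ℝ (G x - c • x) : E →L[ℝ] ℝ) x := by
  refine ((hF x).sub ((hasStrictFDerivAt_norm_sq x).hasFDerivAt.const_mul (c / 2))).congr_fderiv ?_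
  ext v
  simp only [sub_apply, coe_innerSL_apply, smul_apply,
    nsmul_eq_mul, smul_eq_mul, inner_sub_left, real_inner_smul_left]
  ring

theorem ConvexOn.inner_gradient_le (hF : ∀ x, HasFDerivAt F (innerSL ℝ (G x) : E →L[ℝ] ℝ) x)
    (hconv : ConvexOn ℝ univ F) (x y : E) : ⟪G x, y - x⟫ ≤ F y - F x := by
  have hline : ConvexOn ℝ univ fun t : ℝ => F (lineMap x y t) :=
    hconv.comp_affineMap (lineMap x y)
  simpa [slope_def_field] using hline.le_slope_of_hasDerivAt (mem_univ 0) (mem_univ 1) zero_lt_one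
    (hasDerivAt_comp_lineMap hF x y 0)

theorem ConvexOn.inner_gradient_sub_nonneg
    (hF : ∀ x, HasFDerivAt F (innerSL ℝ (G x) : E →L[ℝ] ℝ) x)
    (hconv : ConvexOn ℝ univ F) (x y : E) : 0 ≤ ⟪G x - G y, x - y⟫ := by
  have hxy := hconv.inner_gradient_le hF x y
  have hyx := hconv.inner_gradient_le hF y x
  rw [← neg_sub x y, inner_neg_right] at hxy
  rw [inner_sub_left]
  linarith

theorem convexOn_univ_of_inner_gradient_sub_nonneg
    (hF : ∀ x, HasFDerivAt F (innerSL ℝ (G x) : E →L[ℝ] ℝ) x)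
    (hmono : ∀ x y, 0 ≤ ⟪G x - G y, x - y⟫) : ConvexOn ℝ univ F := by
  refine ⟨convex_univ, fun x _ y _ a b ha hb hab => ?_⟩
  have hline : ConvexOn ℝ univ fun t : ℝ => F (lineMap x y t) := by
    refine Monotone.convexOn_univ_of_deriv
      (fun t => (hasDerivAt_comp_lineMap hF x y t).differentiableAt)
      (monotone_iff_forall_lt.2 fun s t hst => ?_)
    rw [(hasDerivAt_comp_lineMap hF x y s).deriv, (hasDerivAt_comp_lineMap hF x y t).deriv,
      ← sub_nonneg, ← inner_sub_left]
    have h := hmono (lineMap x y t) (lineMap x y s)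
    rw [lineMap_apply_module' x y t, lineMap_apply_module' x y s,
      show t • (y - x) + x - (s • (y - x) + x) = (t - s) • (y - x) by module,
      real_inner_smul_right] at h
    exact nonneg_of_mul_nonneg_right h (sub_pos.2 hst)
  have h := hline.2 (mem_univ 0) (mem_univ 1) ha hb hab
  rw [eq_sub_of_add_eq hab] at h ⊢
  simpa [lineMap_apply_module] using h

theorem le_of_convexOn_sub_half_mul_norm_sq
    (hF : ∀ x, HasFDerivAt F (innerSL ℝ (G x) : E →L[ℝ] ℝ) x) {c : ℝ}
    (hconv : ConvexOn ℝ univ fun x => F x - c / 2 * ‖x‖ ^ 2) (x y : E) :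
    F x + ⟪G x, y - x⟫ + c / 2 * ‖y - x‖ ^ 2 ≤ F y := by
  have h := hconv.inner_gradient_le (hasFDerivAt_sub_half_mul_norm_sq hF c) x y
  rw [inner_sub_left, real_inner_smul_left] at h
  have hsq : ‖y - x‖ ^ 2 = ‖y‖ ^ 2 - ‖x‖ ^ 2 - 2 * ⟪x, y - x⟫ := by
    rw [norm_sub_sq_real, inner_sub_right, real_inner_self_eq_norm_sq, real_inner_comm]
    ring
  rw [hsq]
  linarith

theorem le_add_inner_gradient_add_half_mul_norm_sq
    (hF : ∀ x, HasFDerivAt F (innerSL ℝ (G x) : E →L[ℝ] ℝ) x)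
    (hG : ∀ x y, ⟪G x - G y, x - y⟫ ≤ ℓ * ‖x - y‖ ^ 2) (x y : E) :
    F y ≤ F x + ⟪G x, y - x⟫ + ℓ / 2 * ‖y - x‖ ^ 2 := by
  -- The quadratic upper bound for `F` is the quadratic lower bound for `-F` with modulus `-ℓ`.
  have hF' : ∀ x, HasFDerivAt (-F) (innerSL ℝ (-G x) : E →L[ℝ] ℝ) x := fun x => by
    simpa using (hF x).neg
  have hconv : ConvexOn ℝ univ fun x => (-F) x - -ℓ / 2 * ‖x‖ ^ 2 := by
    refine convexOn_univ_of_inner_gradient_sub_nonneg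
      (hasFDerivAt_sub_half_mul_norm_sq hF' (-ℓ)) fun x y => ?_
    rw [show -G x - -ℓ • x - (-G y - -ℓ • y) = ℓ • (x - y) - (G x - G y) by module,
      inner_sub_left, real_inner_smul_left, real_inner_self_eq_norm_sq]
    linarith [hG x y]
  have h := le_of_convexOn_sub_half_mul_norm_sq hF' hconv x y
  simp only [Pi.neg_apply, inner_neg_left] at h
  linarith

theorem mul_norm_sq_gradient_sub_le
    (hF : ∀ x, HasFDerivAt F (innerSL ℝ (G x) : E →L[ℝ] ℝ) x) (hconv : ConvexOn ℝ univ F)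
    (hG : ∀ x y, ⟪G x - G y, x - y⟫ ≤ ℓ * ‖x - y‖ ^ 2) (x y : E) (t : ℝ) :
    (t - ℓ / 2 * t ^ 2) * ‖G x - G y‖ ^ 2 ≤ F x - F y - ⟪G y, x - y⟫ := by
  set d := G x - G y
  have hlow := hconv.inner_gradient_le hF y (x - t • d)
  have hup := le_add_inner_gradient_add_half_mul_norm_sq hF hG x (x - t • d)
  rw [show x - t • d - y = (x - y) - t • d by abel, inner_sub_right, real_inner_smul_right]
    at hlow
  rw [show x - t • d - x = -(t • d) by abel, inner_neg_right, real_inner_smul_right, norm_neg,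
    norm_smul, mul_pow, Real.norm_eq_abs, sq_abs] at hup
  have hd : ⟪G x, d⟫ - ⟪G y, d⟫ = ‖d‖ ^ 2 := by
    rw [← inner_sub_left, real_inner_self_eq_norm_sq]
  linear_combination hlow + hup - t * hd

theorem norm_sq_gradient_sub_le (hℓ : 0 ≤ ℓ)
    (hF : ∀ x, HasFDerivAt F (innerSL ℝ (G x) : E →L[ℝ] ℝ) x) (hconv : ConvexOn ℝ univ F)
    (hG : ∀ x y, ⟪G x - G y, x - y⟫ ≤ ℓ * ‖x - y‖ ^ 2) (x y : E) :
    ‖G x - G y‖ ^ 2 ≤ ℓ * ⟪G x - G y, x - y⟫ := by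
  refine le_mul_of_forall_quadratic_mul_le hℓ fun t => ?_
  have hxy := mul_norm_sq_gradient_sub_le hF hconv hG x y t
  have hyx := mul_norm_sq_gradient_sub_le hF hconv hG y x t
  rw [← norm_neg, neg_sub, ← neg_sub x y, inner_neg_right] at hyx
  rw [inner_sub_left]
  linarith

end Gradient

theorem norm_smul_sub_smul_le {E : Type*} [NormedAddCommGroup E] [InnerProductSpace ℝ E]
    {a b : ℝ} {r w : E} (ha : 0 ≤ a) (hb : 0 ≤ b) (h : b * ‖w‖ ^ 2 ≤ 2 * a * ⟪w, r⟫) :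
    ‖a • r - b • w‖ ≤ a * ‖r‖ := by
  refine (pow_le_pow_iff_left₀ (norm_nonneg _) (by positivity) two_ne_zero).1 ?_
  rw [norm_sub_sq_real, norm_smul, norm_smul, real_inner_smul_left, real_inner_smul_right,
    Real.norm_of_nonneg ha, Real.norm_of_nonneg hb, real_inner_comm]
  nlinarith

theorem gradient_step_contraction_general
    {E : Type*} [NormedAddCommGroup E] [InnerProductSpace ℝ E]
    (f : E → ℝ) (gradf : E → E)
    (hdiff : ∀ x : E, HasFDerivAt f ((innerSL ℝ (gradf x)) : E →L[ℝ] ℝ) x)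
    (μ L : ℝ) (hμL : μ ≤ L)
    (hsc : ConvexOn ℝ Set.univ (fun x => f x - μ / 2 * ‖x‖ ^ 2))
    (hlip : ∀ x y : E, ‖gradf x - gradf y‖ ≤ L * ‖x - y‖)
    (θs : E) (hcrit : gradf θs = 0) :
    ∀ η : ℝ, 0 < η → η ≤ 2 / (μ + L) →
      ∀ θ : E, ‖(θ - η • gradf θ) - θs‖ ≤ (1 - η * μ) * ‖θ - θs‖ := by
  intro η hη hηle θ
  -- Otherwise `2 / (μ + L) ≤ 0`, division by zero included.
  have hsum : 0 < μ + L := by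
    by_contra! h
    linarith [div_nonpos_of_nonneg_of_nonpos zero_le_two h]
  have hηsum : η * (μ + L) ≤ 2 := (le_div_iff₀ hsum).1 hηle
  set g := fun x => gradf x - μ • x
  have hg := hasFDerivAt_sub_half_mul_norm_sq hdiff μ
  have hup : ∀ x y, ⟪g x - g y, x - y⟫ ≤ (L - μ) * ‖x - y‖ ^ 2 := fun x y => by
    rw [show g x - g y = (gradf x - gradf y) - μ • (x - y) by simp only [g]; module,
      inner_sub_left, real_inner_smul_left, real_inner_self_eq_norm_sq]
    nlinarith [real_inner_le_norm (gradf x - gradf y) (x - y), hlip x y, norm_nonneg (x - y)]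
  have hmono := hsc.inner_gradient_sub_nonneg hg θ θs
  have hcoco := norm_sq_gradient_sub_le (sub_nonneg.2 hμL) hg hsc hup θ θs
  have hstep : θ - η • gradf θ - θs = (1 - η * μ) • (θ - θs) - η • (g θ - g θs) := by
    simp only [g, hcrit]
    module
  rw [hstep]
  refine norm_smul_sub_smul_le (by nlinarith) hη.le ?_
  calc η * ‖g θ - g θs‖ ^ 2 ≤ η * ((L - μ) * ⟪g θ - g θs, θ - θs⟫) :=
        mul_le_mul_of_nonneg_left hcoco hη.le
    _ = η * (L - μ) * ⟪g θ - g θs, θ - θs⟫ := by ring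
    _ ≤ 2 * (1 - η * μ) * ⟪g θ - g θs, θ - θs⟫ :=
        mul_le_mul_of_nonneg_right (by linarith) hmono

/-- **Gradient step contraction.** If `f` is `μ`-strongly convex with `L`-Lipschitz
gradient and `∇f θ* = 0`, then for every step size `0 < η ≤ 2/(μ+L)` the
gradient-descent update is a contraction with factor `1 - ημ` toward `θ*`. -/
theorem gradient_step_contraction
    {E : Type*} [NormedAddCommGroup E] [InnerProductSpace ℝ E]
    (f : E → ℝ) (gradf : E → E)
    (hdiff : ∀ x : E, HasFDerivAt f ((innerSL ℝ (gradf x)) : E →L[ℝ] ℝ) x)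
    (μ L : ℝ) (hμ : 0 < μ) (hL : 0 < L) (hμL : μ ≤ L)
    (hsc : ConvexOn ℝ Set.univ (fun x => f x - μ / 2 * ‖x‖ ^ 2))
    (hlip : ∀ x y : E, ‖gradf x - gradf y‖ ≤ L * ‖x - y‖)
    (θs : E) (hcrit : gradf θs = 0) :
    ∀ η : ℝ, 0 < η → η ≤ 2 / (μ + L) →
      ∀ θ : E, ‖(θ - η • gradf θ) - θs‖ ≤ (1 - η * μ) * ‖θ - θs‖ :=
  gradient_step_contraction_general f gradf hdiff μ L hμL hsc hlip θs hcrit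
end

section
/- Let E be a real inner product space, let f : E → ℝ be differentiable with gradient ∇f, let μ > 0 and L > 0 with μ ≤ L. Assume f is μ-strongly convex, ∇f is L-Lipschitz, and ∇f(θ*) = 0. Fix a step size η with 0 < η ≤ 2/(μ+L) and define the gradient-descent iterates θ_{t+1} = θ_t − η∇f(θ_t) from an arbitrary initial point θ_0. Then for every t, ‖θ_t − θ*‖ ≤ (1 − ημ)^t ‖θ_0 − θ*‖, and consequently θ_t converges to θ* as t → ∞ (geometric convergence of the network weights to the global minimizer). -/
/-!
The gradient step `x ↦ x - η • ∇f x` is a `(1 - ημ)`-contraction, and `θ*` is a fixed point of it.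
Expanding the square, the contraction reduces to `η (μ + L) ≤ 2`, to `‖∇f x - ∇f y‖ ≥ μ ‖x - y‖`
(strong monotonicity) and to the interpolation inequality
`‖∇f x - ∇f y‖² + μL ‖x - y‖² ≤ (μ + L) ⟪∇f x - ∇f y, x - y⟫`.
The latter is the cocoercivity of the gradient of the convex function `φ = f - μ/2 ‖·‖²`,
which by the descent lemma obeys the quadratic upper bound with constant `L - μ`;
cocoercivity follows by evaluating the first-order lower bound of `φ` at the minimiser of
that upper bound.
-/

open scoped RealInnerProductSpace
open Set

section Gradient

variable {E : Type*} [NormedAddCommGroup E] [InnerProductSpace ℝ E]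

lemma HasFDerivAt.hasDerivAt_comp_add_smul {f : E → ℝ} {g x v : E} {t : ℝ}
    (hf : HasFDerivAt f (innerSL ℝ g) (x + t • v)) :
    HasDerivAt (fun s : ℝ => f (x + s • v)) ⟪g, v⟫ t := by
  have hline : HasDerivAt (fun s : ℝ => x + s • v) v t := by
    simpa using ((hasDerivAt_id t).smul_const v).const_add x
  exact hf.comp_hasDerivAt t hline

lemma HasFDerivAt.sub_half_mul_norm_sq {f : E → ℝ} {g x : E}
    (hf : HasFDerivAt f (innerSL ℝ g) x) (μ : ℝ) :
    HasFDerivAt (fun x => f x - μ / 2 * ‖x‖ ^ 2) (innerSL ℝ (g - μ • x)) x := by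
  refine (hf.sub ((hasStrictFDerivAt_norm_sq x).hasFDerivAt.const_mul (μ / 2))).congr_fderiv ?_
  ext v
  simp only [sub_apply, coe_innerSL_apply, smul_apply,
    nsmul_eq_mul, Nat.cast_ofNat, smul_eq_mul, inner_sub_left, real_inner_smul_left]
  ring

lemma ConvexOn.add_inner_sub_le {φ : E → ℝ} {g x : E} (hφ : ConvexOn ℝ univ φ)
    (hg : HasFDerivAt φ (innerSL ℝ g) x) (y : E) :
    φ x + ⟪g, y - x⟫ ≤ φ y := by
  have hline : ConvexOn ℝ univ (fun s : ℝ => φ (x + s • (y - x))) := by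
    simpa [Function.comp_def, AffineMap.lineMap_apply, add_comm] using
      hφ.comp_affineMap (AffineMap.lineMap x y : ℝ →ᵃ[ℝ] E)
  have hderiv := hline.le_slope_of_hasDerivAt (mem_univ 0) (mem_univ 1) one_pos
    (HasFDerivAt.hasDerivAt_comp_add_smul (t := 0) (by simpa using hg))
  simp only [slope_def_field, one_smul, add_sub_cancel, zero_smul, add_zero, sub_zero,
    div_one] at hderiv
  linarith

lemma ConvexOn.inner_sub_nonneg {φ : E → ℝ} {g : E → E} (hφ : ConvexOn ℝ univ φ)
    (hg : ∀ x, HasFDerivAt φ (innerSL ℝ (g x)) x) (x y : E) :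
    0 ≤ ⟪g x - g y, x - y⟫ := by
  have hxy := hφ.add_inner_sub_le (hg x) y
  have hyx := hφ.add_inner_sub_le (hg y) x
  rw [← neg_sub x y, inner_neg_right] at hxy
  rw [inner_sub_left]
  linarith

lemma le_add_inner_sub_add_of_lipschitz_gradient {f : E → ℝ} {g : E → E} {L : ℝ}
    (hf : ∀ x, HasFDerivAt f (innerSL ℝ (g x)) x) (hg : ∀ x y, ‖g x - g y‖ ≤ L * ‖x - y‖)
    (x y : E) : f y ≤ f x + ⟪g x, y - x⟫ + L / 2 * ‖y - x‖ ^ 2 := by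
  set v := y - x
  set ψ : ℝ → ℝ := fun t => f (x + t • v) - t * ⟪g x, v⟫ - L / 2 * t ^ 2 * ‖v‖ ^ 2
  have hψ : ∀ t, HasDerivAt ψ (⟪g (x + t • v) - g x, v⟫ - L * t * ‖v‖ ^ 2) t := by
    intro t
    refine ((((hf _).hasDerivAt_comp_add_smul).sub ((hasDerivAt_id t).mul_const ⟪g x, v⟫)).sub
      (((hasDerivAt_pow 2 t).const_mul (L / 2)).mul_const (‖v‖ ^ 2))).congr_deriv ?_
    rw [inner_sub_left]
    ring
  have hψ' : ∀ t ∈ interior (Icc (0 : ℝ) 1), ⟪g (x + t • v) - g x, v⟫ ≤ L * t * ‖v‖ ^ 2 := by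
    intro t ht
    rw [interior_Icc] at ht
    calc ⟪g (x + t • v) - g x, v⟫ ≤ ‖g (x + t • v) - g x‖ * ‖v‖ := real_inner_le_norm _ _
      _ ≤ L * ‖t • v‖ * ‖v‖ := by gcongr; simpa using hg (x + t • v) x
      _ = L * t * ‖v‖ ^ 2 := by rw [norm_smul, Real.norm_of_nonneg ht.1.le]; ring
  have hanti : AntitoneOn ψ (Icc 0 1) :=
    antitoneOn_of_deriv_nonpos (convex_Icc 0 1)
      (fun t _ => (hψ t).continuousAt.continuousWithinAt)
      (fun t _ => (hψ t).differentiableAt.differentiableWithinAt)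
      (fun t ht => by rw [(hψ t).deriv]; linarith [hψ' t ht])
  have h01 := hanti (left_mem_Icc.2 zero_le_one) (right_mem_Icc.2 zero_le_one) zero_le_one
  simp only [ψ, v, one_smul, zero_smul, add_sub_cancel, add_zero] at h01
  linarith

lemma add_inner_sub_add_norm_sq_le {φ : E → ℝ} {g : E → E} {C : ℝ} (hC : 0 < C)
    (hlow : ∀ x y, φ x + ⟪g x, y - x⟫ ≤ φ y)
    (hup : ∀ x y, φ y ≤ φ x + ⟪g x, y - x⟫ + C / 2 * ‖y - x‖ ^ 2) (x y : E) :
    φ x + ⟪g x, y - x⟫ + ‖g y - g x‖ ^ 2 / (2 * C) ≤ φ y := by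
  set Δ := g y - g x
  -- compare both bounds at the minimiser of the quadratic upper bound around `y`
  have hlow' := hlow x (y - C⁻¹ • Δ)
  have hup' := hup y (y - C⁻¹ • Δ)
  rw [sub_right_comm, inner_sub_right, real_inner_smul_right] at hlow'
  rw [sub_sub_cancel_left, inner_neg_right, real_inner_smul_right, norm_neg, norm_smul,
    mul_pow, norm_inv, Real.norm_of_nonneg hC.le] at hup'
  have hΔ : ⟪g y, Δ⟫ - ⟪g x, Δ⟫ = ‖Δ‖ ^ 2 := by
    rw [← inner_sub_left, real_inner_self_eq_norm_sq]
  have e1 : C / 2 * (C⁻¹ ^ 2 * ‖Δ‖ ^ 2) = ‖Δ‖ ^ 2 / (2 * C) := by field_simp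
  have e2 : C⁻¹ * ⟪g y, Δ⟫ - C⁻¹ * ⟪g x, Δ⟫ = 2 * (‖Δ‖ ^ 2 / (2 * C)) := by
    rw [← mul_sub, hΔ]; field_simp
  linarith

lemma norm_sub_sq_le_mul_inner_sub {φ : E → ℝ} {g : E → E} {C : ℝ} (hC : 0 < C)
    (hlow : ∀ x y, φ x + ⟪g x, y - x⟫ ≤ φ y)
    (hup : ∀ x y, φ y ≤ φ x + ⟪g x, y - x⟫ + C / 2 * ‖y - x‖ ^ 2) (x y : E) :
    ‖g x - g y‖ ^ 2 ≤ C * ⟪g x - g y, x - y⟫ := by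
  have hxy := add_inner_sub_add_norm_sq_le hC hlow hup x y
  have hyx := add_inner_sub_add_norm_sq_le hC hlow hup y x
  rw [norm_sub_rev] at hxy
  have e : ⟪g x - g y, x - y⟫ = -(⟪g x, y - x⟫ + ⟪g y, x - y⟫) := by
    rw [inner_sub_left, ← neg_sub y x, inner_neg_right, inner_neg_right]; ring
  calc ‖g x - g y‖ ^ 2 = C * (‖g x - g y‖ ^ 2 / (2 * C) + ‖g x - g y‖ ^ 2 / (2 * C)) := by
        field_simp; ring
    _ ≤ C * ⟪g x - g y, x - y⟫ := by gcongr; linarith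

end Gradient

section StronglyConvex

variable {E : Type*} [NormedAddCommGroup E] [InnerProductSpace ℝ E]
  {f : E → ℝ} {g : E → E} {μ L : ℝ}

lemma mul_norm_sub_sq_le_inner_sub (hf : ∀ x, HasFDerivAt f (innerSL ℝ (g x)) x)
    (hsc : ConvexOn ℝ univ (fun x => f x - μ / 2 * ‖x‖ ^ 2)) (x y : E) :
    μ * ‖x - y‖ ^ 2 ≤ ⟪g x - g y, x - y⟫ := by
  have h := hsc.inner_sub_nonneg (fun x => (hf x).sub_half_mul_norm_sq μ) x y
  rw [sub_sub_sub_comm, ← smul_sub, inner_sub_left, real_inner_smul_left,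
    real_inner_self_eq_norm_sq] at h
  linarith

lemma sub_half_mul_norm_sq_le_of_lipschitz_gradient (hf : ∀ x, HasFDerivAt f (innerSL ℝ (g x)) x)
    (hlip : ∀ x y, ‖g x - g y‖ ≤ L * ‖x - y‖) (x y : E) :
    f y - μ / 2 * ‖y‖ ^ 2 ≤
      f x - μ / 2 * ‖x‖ ^ 2 + ⟪g x - μ • x, y - x⟫ + (L - μ) / 2 * ‖y - x‖ ^ 2 := by
  have hdesc := le_add_inner_sub_add_of_lipschitz_gradient hf hlip x y
  have hsq : ‖y‖ ^ 2 = ‖x‖ ^ 2 + 2 * ⟪x, y - x⟫ + ‖y - x‖ ^ 2 := by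
    simpa using norm_add_sq_real x (y - x)
  rw [inner_sub_left, real_inner_smul_left]
  linear_combination hdesc - μ / 2 * hsq

lemma norm_sub_sq_add_mul_le_inner_sub (hf : ∀ x, HasFDerivAt f (innerSL ℝ (g x)) x)
    (hsc : ConvexOn ℝ univ (fun x => f x - μ / 2 * ‖x‖ ^ 2))
    (hlip : ∀ x y, ‖g x - g y‖ ≤ L * ‖x - y‖) (hμL : μ ≤ L) (x y : E) :
    ‖g x - g y‖ ^ 2 + μ * L * ‖x - y‖ ^ 2 ≤ (μ + L) * ⟪g x - g y, x - y⟫ := by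
  have hmono := mul_norm_sub_sq_le_inner_sub hf hsc x y
  rcases hμL.lt_or_eq with hlt | rfl
  · have hgφ x := (hf x).sub_half_mul_norm_sq μ
    have hup := sub_half_mul_norm_sq_le_of_lipschitz_gradient (μ := μ) hf hlip
    have hco := norm_sub_sq_le_mul_inner_sub (sub_pos.2 hlt)
      (fun x y => hsc.add_inner_sub_le (hgφ x) y) hup x y
    rw [sub_sub_sub_comm, ← smul_sub] at hco
    set G := g x - g y
    set d := x - y
    clear_value G d
    rw [norm_sub_sq_real, inner_sub_left, real_inner_smul_left, real_inner_smul_right,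
      real_inner_self_eq_norm_sq, norm_smul, mul_pow, Real.norm_eq_abs, sq_abs] at hco
    linear_combination hco
  · have hcs := real_inner_le_norm (g x - g y) (x - y)
    have hs : ⟪g x - g y, x - y⟫ ≤ μ * ‖x - y‖ ^ 2 := by
      nlinarith [mul_le_mul_of_nonneg_right (hlip x y) (norm_nonneg (x - y))]
    have hq : ‖g x - g y‖ ^ 2 ≤ (μ * ‖x - y‖) ^ 2 := pow_le_pow_left₀ (norm_nonneg _) (hlip x y) 2
    linear_combination hq - 2 * μ * (le_antisymm hs hmono)

lemma mul_le_one_of_le_two_div_add {μ L η : ℝ} (hμ : 0 < μ) (hμL : μ ≤ L)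
    (hη : η ≤ 2 / (μ + L)) : η * μ ≤ 1 := by
  calc η * μ ≤ 2 / (μ + L) * μ := by gcongr
    _ ≤ 1 := by rw [div_mul_eq_mul_div, div_le_one (by linarith)]; linarith

lemma norm_sub_smul_sub_sub_smul_le (hf : ∀ x, HasFDerivAt f (innerSL ℝ (g x)) x)
    (hsc : ConvexOn ℝ univ (fun x => f x - μ / 2 * ‖x‖ ^ 2))
    (hlip : ∀ x y, ‖g x - g y‖ ≤ L * ‖x - y‖) (hμ : 0 < μ) (hμL : μ ≤ L) {η : ℝ} (hη : 0 ≤ η)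
    (hη' : η ≤ 2 / (μ + L)) (x y : E) :
    ‖(x - η • g x) - (y - η • g y)‖ ≤ (1 - η * μ) * ‖x - y‖ := by
  have hmono := mul_norm_sub_sq_le_inner_sub hf hsc x y
  have hnest := norm_sub_sq_add_mul_le_inner_sub hf hsc hlip hμL x y
  rw [sub_sub_sub_comm, ← smul_sub]
  set G := g x - g y
  set d := x - y
  clear_value G d
  have hGd : μ ^ 2 * ‖d‖ ^ 2 ≤ ‖G‖ ^ 2 := by
    have hcs := real_inner_le_norm G d
    rw [← mul_pow]
    refine pow_le_pow_left₀ (by positivity) ?_ 2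
    rcases (norm_nonneg d).eq_or_lt with hd | hd
    · rw [← hd, mul_zero]; exact norm_nonneg G
    · nlinarith
  have hsum : η * (μ + L) ≤ 2 := by rwa [le_div_iff₀ (by linarith)] at hη'
  have hsq : ‖d - η • G‖ ^ 2 ≤ ((1 - η * μ) * ‖d‖) ^ 2 := by
    rw [norm_sub_sq_real, real_inner_smul_right, norm_smul, mul_pow, Real.norm_of_nonneg hη,
      real_inner_comm]
    refine le_of_mul_le_mul_left ?_ (by linarith : 0 < μ + L)
    linear_combination 2 * mul_le_mul_of_nonneg_left hnest hη +
      mul_le_mul_of_nonneg_left hGd (mul_nonneg hη (sub_nonneg.2 hsum))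
  have hημ := mul_le_one_of_le_two_div_add hμ hμL hη'
  exact (sq_le_sq₀ (norm_nonneg _) (by nlinarith [norm_nonneg d])).1 hsq

end StronglyConvex

theorem gradient_descent_geometric_convergence_general
    {E : Type*} [NormedAddCommGroup E] [InnerProductSpace ℝ E]
    (f : E → ℝ) (gradf : E → E)
    (hdiff : ∀ x : E, HasFDerivAt f ((innerSL ℝ (gradf x)) : E →L[ℝ] ℝ) x)
    (μ L : ℝ) (hμ : 0 < μ) (hμL : μ ≤ L)
    (hsc : ConvexOn ℝ Set.univ (fun x => f x - μ / 2 * ‖x‖ ^ 2))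
    (hlip : ∀ x y : E, ‖gradf x - gradf y‖ ≤ L * ‖x - y‖)
    (θs : E) (hcrit : gradf θs = 0)
    (η : ℝ) (hη : 0 < η) (hη' : η ≤ 2 / (μ + L))
    (θ : ℕ → E) (hiter : ∀ t : ℕ, θ (t + 1) = θ t - η • gradf (θ t)) :
    (∀ t : ℕ, ‖θ t - θs‖ ≤ (1 - η * μ) ^ t * ‖θ 0 - θs‖) ∧
      Filter.Tendsto θ Filter.atTop (nhds θs) := by
  have hρ : 0 ≤ 1 - η * μ := sub_nonneg.2 (mul_le_one_of_le_two_div_add hμ hμL hη')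
  have hstep : ∀ t, ‖θ (t + 1) - θs‖ ≤ (1 - η * μ) * ‖θ t - θs‖ := fun t => by
    simpa [hiter, hcrit] using
      norm_sub_smul_sub_sub_smul_le hdiff hsc hlip hμ hμL hη.le hη' (θ t) θs
  have hbound : ∀ t, ‖θ t - θs‖ ≤ (1 - η * μ) ^ t * ‖θ 0 - θs‖ := fun t =>
    le_geom (u := fun t => ‖θ t - θs‖) hρ t fun k _ => hstep k
  refine ⟨hbound, tendsto_iff_norm_sub_tendsto_zero.2 ?_⟩
  refine squeeze_zero (fun _ => norm_nonneg _) hbound ?_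
  simpa using (tendsto_pow_atTop_nhds_zero_of_lt_one hρ (by nlinarith)).mul_const ‖θ 0 - θs‖

/-- **Geometric convergence of gradient descent.** If `f` is `μ`-strongly convex with
`L`-Lipschitz gradient, `∇f θ* = 0`, and `0 < η ≤ 2/(μ+L)`, then the iterates
`θ_{t+1} = θ_t − η ∇f(θ_t)` satisfy `‖θ_t − θ*‖ ≤ (1 − ημ)^t ‖θ_0 − θ*‖` and
converge to `θ*`. -/
theorem gradient_descent_geometric_convergence
    {E : Type*} [NormedAddCommGroup E] [InnerProductSpace ℝ E]
    (f : E → ℝ) (gradf : E → E)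
    (hdiff : ∀ x : E, HasFDerivAt f ((innerSL ℝ (gradf x)) : E →L[ℝ] ℝ) x)
    (μ L : ℝ) (hμ : 0 < μ) (hL : 0 < L) (hμL : μ ≤ L)
    (hsc : ConvexOn ℝ Set.univ (fun x => f x - μ / 2 * ‖x‖ ^ 2))
    (hlip : ∀ x y : E, ‖gradf x - gradf y‖ ≤ L * ‖x - y‖)
    (θs : E) (hcrit : gradf θs = 0)
    (η : ℝ) (hη : 0 < η) (hη' : η ≤ 2 / (μ + L))
    (θ : ℕ → E) (hiter : ∀ t : ℕ, θ (t + 1) = θ t - η • gradf (θ t)) :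
    (∀ t : ℕ, ‖θ t - θs‖ ≤ (1 - η * μ) ^ t * ‖θ 0 - θs‖) ∧
      Filter.Tendsto θ Filter.atTop (nhds θs) :=
  gradient_descent_geometric_convergence_general f gradf hdiff μ L hμ hμL hsc hlip θs hcrit η hη hη'
    θ hiter
end

section
/- Let E be a real inner product space and f : E → ℝ a convex differentiable function whose gradient ∇f is L-Lipschitz with L > 0. Then the gradient is 1/L-cocoercive: for all x, y ∈ E, ⟪∇f(x) − ∇f(y), x − y⟫ ≥ (1/L)‖∇f(x) − ∇f(y)‖². -/
/-!
Convexity bounds `f` below by its tangent at `x`, `f z ≥ f x + ⟪∇f x, z - x⟫`, and the Lipschitz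
gradient bounds it above by a parabola at `y`, `f z ≤ f y + ⟪∇f y, z - y⟫ + L/2 ‖z - y‖²`.
Comparing the two at the vertex `z = y - (∇f y - ∇f x) / L` of the parabola gives
`f y - f x - ⟪∇f x, y - x⟫ ≥ ‖∇f y - ∇f x‖² / (2L)`; adding this to the same inequality with `x`
and `y` exchanged gives cocoercivity.
-/

open scoped RealInnerProductSpace

open Set

section NormedSpace

variable {E : Type*} [NormedAddCommGroup E] [NormedSpace ℝ E]

theorem ConvexOn.le_sub_of_hasFDerivAt {s : Set E} {f : E → ℝ} {f' : E →L[ℝ] ℝ} {x y : E}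
    (hf : ConvexOn ℝ s f) (hx : x ∈ s) (hy : y ∈ s) (hf' : HasFDerivAt f f' x) :
    f' (y - x) ≤ f y - f x := by
  have hline : ConvexOn ℝ (AffineMap.lineMap (k := ℝ) x y ⁻¹' s) (f ∘ AffineMap.lineMap x y) :=
    hf.comp_affineMap _
  have hderiv : HasDerivAt (f ∘ AffineMap.lineMap (k := ℝ) x y) (f' (y - x)) 0 := by
    refine HasFDerivAt.comp_hasDerivAt (0 : ℝ) ?_ AffineMap.hasDerivAt_lineMap
    rwa [AffineMap.lineMap_apply_zero]
  simpa [slope] using hline.le_slope_of_hasDerivAt (x := 0) (y := 1) (by simpa) (by simpa)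
    zero_lt_one hderiv

theorem image_sub_sub_fderiv_le_of_lipschitz {f : E → ℝ} {f' : E → E →L[ℝ] ℝ} {L : ℝ}
    (hf : ∀ x, HasFDerivAt f (f' x) x) (hlip : ∀ x y, ‖f' x - f' y‖ ≤ L * ‖x - y‖) (x y : E) :
    f y - f x - f' x (y - x) ≤ L / 2 * ‖y - x‖ ^ 2 := by
  set d := y - x
  let γ := AffineMap.lineMap (k := ℝ) x y
  have hγ : ∀ t, HasDerivAt (f ∘ γ) (f' (γ t) d) t := fun t =>
    (hf (γ t)).comp_hasDerivAt t AffineMap.hasDerivAt_lineMap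
  have hφ : ∀ t, HasDerivAt (fun t => f (γ t) - t * f' x d) (f' (γ t) d - f' x d) t := fun t => by
    have := (hγ t).sub ((hasDerivAt_id' t).mul_const (f' x d))
    rwa [one_mul] at this
  have hB : ∀ t, HasDerivAt (fun t : ℝ => f x + L / 2 * ‖d‖ ^ 2 * t ^ 2)
      (L * ‖d‖ ^ 2 * t) t := fun t =>
    (((hasDerivAt_pow 2 t).const_mul _).const_add _).congr_deriv (by push_cast; ring)
  have hbound : ∀ t ∈ Ico (0 : ℝ) 1, f' (γ t) d - f' x d ≤ L * ‖d‖ ^ 2 * t := by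
    intro t ht
    have hγx : γ t - x = t • d := by simp [γ, AffineMap.lineMap_apply_module', d]
    calc f' (γ t) d - f' x d = (f' (γ t) - f' x) d := rfl
      _ ≤ ‖f' (γ t) - f' x‖ * ‖d‖ := (Real.le_norm_self _).trans ((f' (γ t) - f' x).le_opNorm d)
      _ ≤ L * ‖γ t - x‖ * ‖d‖ := mul_le_mul_of_nonneg_right (hlip _ _) (norm_nonneg d)
      _ = L * ‖d‖ ^ 2 * t := by rw [hγx, norm_smul, Real.norm_of_nonneg ht.1]; ring
  have := image_le_of_deriv_right_le_deriv_boundary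
    (fun t _ => (hφ t).continuousAt.continuousWithinAt) (fun t _ => (hφ t).hasDerivWithinAt)
    (by simp [γ]) (fun t _ => (hB t).continuousAt.continuousWithinAt)
    (fun t _ => (hB t).hasDerivWithinAt) hbound (right_mem_Icc.2 zero_le_one)
  simp only [γ, AffineMap.lineMap_apply_one, one_mul, one_pow, mul_one] at this
  linarith

end NormedSpace

section InnerProductSpace

variable {E : Type*} [NormedAddCommGroup E] [InnerProductSpace ℝ E]

theorem ConvexOn.sq_norm_grad_sub_div_le {f : E → ℝ} {g : E → E} {L : ℝ}
    (hf : ∀ x, HasFDerivAt f (innerSL ℝ (g x)) x) (hconv : ConvexOn ℝ univ f)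
    (hlip : ∀ x y, ‖g x - g y‖ ≤ L * ‖x - y‖) (x y : E) :
    ‖g y - g x‖ ^ 2 / (2 * L) ≤ f y - f x - ⟪g x, y - x⟫ := by
  set δ := g y - g x
  obtain ⟨z, hz⟩ : ∃ z, z = y - L⁻¹ • δ := ⟨_, rfl⟩
  have hlow : ⟪g x, z - x⟫ ≤ f z - f x :=
    hconv.le_sub_of_hasFDerivAt (mem_univ x) (mem_univ z) (hf x)
  have hup : f z - f y - ⟪g y, z - y⟫ ≤ L / 2 * ‖z - y‖ ^ 2 :=
    image_sub_sub_fderiv_le_of_lipschitz hf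
      (fun a b => by rw [← map_sub, innerSL_apply_norm]; exact hlip a b) y z
  have hgap : ⟪g x, z - x⟫ - ⟪g y, z - y⟫ = ⟪g x, y - x⟫ + L⁻¹ * ‖δ‖ ^ 2 := by
    rw [show z - x = (y - x) - L⁻¹ • δ by rw [hz]; abel, show z - y = -(L⁻¹ • δ) by rw [hz]; abel,
      inner_sub_right, inner_neg_right, real_inner_smul_right, real_inner_smul_right,
      ← real_inner_self_eq_norm_sq, inner_sub_left]
    ring
  have hquad : L / 2 * ‖z - y‖ ^ 2 = L⁻¹ / 2 * ‖δ‖ ^ 2 := by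
    rw [show z - y = -(L⁻¹ • δ) by rw [hz]; abel, norm_neg, norm_smul, mul_pow, Real.norm_eq_abs,
      sq_abs]
    have hL : L⁻¹ * L * L⁻¹ = L⁻¹ := by simpa using mul_inv_mul_cancel L⁻¹
    linear_combination ‖δ‖ ^ 2 / 2 * hL
  have hcoef : ‖δ‖ ^ 2 / (2 * L) = L⁻¹ * ‖δ‖ ^ 2 - L⁻¹ / 2 * ‖δ‖ ^ 2 := by ring
  linarith

end InnerProductSpace

theorem convex_lipschitz_grad_cocoercive_general
    {E : Type*} [NormedAddCommGroup E] [InnerProductSpace ℝ E]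
    (f : E → ℝ) (gradf : E → E)
    (hdiff : ∀ x : E, HasFDerivAt f ((innerSL ℝ (gradf x)) : E →L[ℝ] ℝ) x)
    (hconv : ConvexOn ℝ Set.univ f)
    (L : ℝ)
    (hlip : ∀ x y : E, ‖gradf x - gradf y‖ ≤ L * ‖x - y‖) :
    ∀ x y : E, ⟪gradf x - gradf y, x - y⟫ ≥ (1 / L) * ‖gradf x - gradf y‖ ^ 2 := by
  intro x y
  have hxy := hconv.sq_norm_grad_sub_div_le hdiff hlip x y
  have hyx := hconv.sq_norm_grad_sub_div_le hdiff hlip y x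
  rw [norm_sub_rev] at hxy
  have hinner : ⟪gradf x - gradf y, x - y⟫ = -⟪gradf x, y - x⟫ - ⟪gradf y, x - y⟫ := by
    rw [inner_sub_left, ← inner_neg_right, neg_sub]
  have hhalf : 1 / L * ‖gradf x - gradf y‖ ^ 2 =
      ‖gradf x - gradf y‖ ^ 2 / (2 * L) + ‖gradf x - gradf y‖ ^ 2 / (2 * L) := by
    ring
  linarith

/-- **Cocoercivity of the gradient.** If `f` is convex and differentiable with an
`L`-Lipschitz gradient (`L > 0`), then the gradient is `1/L`-cocoercive:
`⟪∇f x − ∇f y, x − y⟫ ≥ (1/L)‖∇f x − ∇f y‖²`. -/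
theorem convex_lipschitz_grad_cocoercive
    {E : Type*} [NormedAddCommGroup E] [InnerProductSpace ℝ E]
    (f : E → ℝ) (gradf : E → E)
    (hdiff : ∀ x : E, HasFDerivAt f ((innerSL ℝ (gradf x)) : E →L[ℝ] ℝ) x)
    (hconv : ConvexOn ℝ Set.univ f)
    (L : ℝ) (hL : 0 < L)
    (hlip : ∀ x y : E, ‖gradf x - gradf y‖ ≤ L * ‖x - y‖) :
    ∀ x y : E, ⟪gradf x - gradf y, x - y⟫ ≥ (1 / L) * ‖gradf x - gradf y‖ ^ 2 :=
  convex_lipschitz_grad_cocoercive_general f gradf hdiff hconv L hlip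
end

section
/- Let N ≥ 1, let α ∈ (0, 1), and let s₁, …, s_N, s_{N+1} be real-valued random variables on a probability space that are exchangeable (their joint law is invariant under every permutation of the N+1 indices). Let k = ⌈(1−α)(N+1)⌉ and assume k ≤ N, and let q be the k-th smallest value among s₁, …, s_N. Then P( s_{N+1} ≤ q ) ≥ 1 − α. -/
/-!
Write `Rⱼ` for the number of scores strictly below `sⱼ`. The event `s_{N+1} ≤ q` is exactly
`R_{N+1} < k`. For every outcome at least `k` indices `j` satisfy `Rⱼ < k`, so
`∑ⱼ P(Rⱼ < k) ≥ k`; by exchangeability all these probabilities are equal, hence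
`P(R_{N+1} < k) ≥ k / (N + 1) ≥ 1 − α`.
-/

open MeasureTheory

/-- The `k`-th smallest value (the `k`-th order statistic, `1 ≤ k ≤ N`) of the values
`v 0, …, v (N-1)`: entry at index `k - 1` of the sorted list of values. -/
noncomputable def kthSmallest {N : ℕ} (v : Fin N → ℝ) (k : ℕ) : ℝ :=
  ((List.ofFn v).insertionSort (· ≤ ·)).getD (k - 1) 0

open Finset
open scoped ENNReal

theorem List.countP_ofFn {β : Type*} {n : ℕ} (v : Fin n → β) (p : β → Prop)
    [DecidablePred p] :
    (List.ofFn v).countP (fun b => decide (p b)) = #{i | p (v i)} := by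
  rw [← Multiset.coe_countP, ← Fin.univ_val_map, Multiset.countP_map]
  rfl

section Order

variable {α : Type*} [LinearOrder α]

theorem List.Pairwise.getElem_lt_iff_lt_countP {l : List α} (hl : l.Pairwise (· ≤ ·)) (x : α)
    {i : ℕ} (hi : i < l.length) : l[i] < x ↔ i < l.countP (· < x) := by
  induction l generalizing i with
  | nil => simp at hi
  | cons a l ih =>
    rw [List.pairwise_cons] at hl
    by_cases hax : a < x
    · cases i with
      | zero => simp [hax]
      | succ i => simp [ih hl.2 (Nat.lt_of_succ_lt_succ hi), hax]
    · have hge : ∀ b ∈ a :: l, ¬ b < x := by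
        rintro b (_ | ⟨_, hb⟩)
        · exact hax
        · exact fun hbx => hax ((hl.1 b hb).trans_lt hbx)
      rw [List.countP_eq_zero.2 (by simpa using hge)]
      simpa using hge _ (List.getElem_mem hi)

variable {ι : Type*} [Fintype ι]

def rank (x : ι → α) (j : ι) : ℕ := #{i | x i < x j}

theorem rank_comp_perm (x : ι → α) (σ : Equiv.Perm ι) (j : ι) :
    rank (x ∘ σ) j = rank x (σ j) :=
  Finset.card_equiv σ (by simp)

theorem le_card_rank_lt (x : ι → α) {k : ℕ} (hk : k ≤ Fintype.card ι) :
    k ≤ #{j | rank x j < k} := by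
  classical
  set T : Finset ι := {j | rank x j < k}
  -- An entry minimal outside `T` has only entries of `T` below it, so its rank is `< #T`.
  by_contra! hlt
  obtain ⟨j, hj, hmin⟩ := Finset.exists_min_image Tᶜ x
    (Finset.card_pos.1 (by rw [card_compl]; omega))
  have hbelow : ({i | x i < x j} : Finset ι) ⊆ T := fun i hi => by
    by_contra hiT
    exact (hmin i (mem_compl.2 hiT)).not_gt (mem_filter.1 hi).2
  exact (mem_compl.1 hj) (mem_filter.2 ⟨mem_univ _, (card_le_card hbelow).trans_lt hlt⟩)

theorem rank_last {N : ℕ} (x : Fin (N + 1) → α) :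
    rank x (Fin.last N) = #{i : Fin N | x i.castSucc < x (Fin.last N)} := by
  rw [rank, card_filter, card_filter, Fin.sum_univ_castSucc]
  simp

end Order

theorem le_kthSmallest_iff {N : ℕ} (v : Fin N → ℝ) {k : ℕ} (hk₁ : 1 ≤ k) (hkN : k ≤ N)
    (x : ℝ) :
    x ≤ kthSmallest v k ↔ #{i | v i < x} < k := by
  set l := (List.ofFn v).insertionSort (· ≤ ·)
  have hkl : k - 1 < l.length := by simp [l]; omega
  have hcount : l.countP (· < x) = #{i | v i < x} :=
    ((List.perm_insertionSort _ _).countP_eq _).trans (List.countP_ofFn v (· < x))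
  rw [kthSmallest, List.getD_eq_getElem _ _ hkl, ← not_lt,
    (List.pairwise_insertionSort _ _).getElem_lt_iff_lt_countP x hkl, hcount]
  omega

theorem ENNReal.ofReal_le_natCast_div {a : ℝ} {n k : ℕ} (hn : n ≠ 0) (h : a * n ≤ k) :
    ENNReal.ofReal a ≤ k / n := by
  rw [ENNReal.le_div_iff_mul_le (by simp [hn]) (by simp), ← ENNReal.ofReal_natCast n,
    ← ENNReal.ofReal_mul' n.cast_nonneg, ← ENNReal.ofReal_natCast k]
  exact ENNReal.ofReal_le_ofReal h

theorem MeasureTheory.nat_mul_measure_univ_le_sum_measure {Ω ι : Type*} [MeasurableSpace Ω]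
    [Fintype ι] (μ : Measure Ω) {E : ι → Set Ω} (hE : ∀ i, MeasurableSet (E i))
    [∀ ω, DecidablePred (ω ∈ E ·)] {k : ℕ}
    (h : ∀ ω, k ≤ #{i | ω ∈ E i}) :
    k * μ Set.univ ≤ ∑ i, μ (E i) := by
  calc k * μ Set.univ = ∫⁻ _, (k : ℝ≥0∞) ∂μ := (lintegral_const _).symm
    _ ≤ ∫⁻ ω, ∑ i, (E i).indicator 1 ω ∂μ := lintegral_mono fun ω => by
        simpa [Set.indicator_apply] using h ω
    _ = ∑ i, μ (E i) := by
        rw [lintegral_finsetSum _ fun i _ => measurable_one.indicator (hE i)]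
        simp_rw [lintegral_indicator_one (hE _)]

section Exchangeable

variable {Ω ι β : Type*} [MeasurableSpace Ω] [MeasurableSpace β]

def Exchangeable (P : Measure Ω) (X : Ω → ι → β) : Prop :=
  ∀ σ : Equiv.Perm ι, P.map (fun ω => X ω ∘ σ) = P.map X

theorem Exchangeable.measure_preimage_comp_perm {P : Measure Ω} {X : Ω → ι → β}
    (hX : Exchangeable P X) (hXm : Measurable X) (σ : Equiv.Perm ι) {A : Set (ι → β)}
    (hA : MeasurableSet A) : P ((fun ω => X ω ∘ σ) ⁻¹' A) = P (X ⁻¹' A) := by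
  have hσ : Measurable fun ω => X ω ∘ σ :=
    measurable_pi_iff.2 fun i => (measurable_pi_apply (σ i)).comp hXm
  rw [← Measure.map_apply hσ hA, hX σ, Measure.map_apply hXm hA]

variable [Fintype ι] [LinearOrder β] [TopologicalSpace β] [OpensMeasurableSpace β]
  [SecondCountableTopology β] [OrderClosedTopology β]

theorem measurableSet_rank_lt (j : ι) (k : ℕ) :
    MeasurableSet {x : ι → β | rank x j < k} := by
  have hrank : Measurable fun x : ι → β => rank x j := by
    simp_rw [rank, card_filter]
    exact Finset.measurable_sum _ fun i _ => Measurable.ite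
      (measurableSet_lt (measurable_pi_apply i) (measurable_pi_apply j))
      measurable_const measurable_const
  exact measurableSet_lt hrank measurable_const

theorem Exchangeable.measure_rank_lt_eq {P : Measure Ω} {X : Ω → ι → β}
    (hX : Exchangeable P X) (hXm : Measurable X) (k : ℕ) (i j : ι) :
    P {ω | rank (X ω) i < k} = P {ω | rank (X ω) j < k} := by
  classical
  have hswap : {ω | rank (X ω) i < k}
      = (fun ω => X ω ∘ Equiv.swap i j) ⁻¹' {x | rank x j < k} := by
    ext ω
    simp [rank_comp_perm]
  rw [hswap, hX.measure_preimage_comp_perm hXm _ (measurableSet_rank_lt j k)]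
  rfl

theorem Exchangeable.natCast_div_card_le_measure_rank_lt {P : Measure Ω}
    [IsProbabilityMeasure P] {X : Ω → ι → β} (hX : Exchangeable P X) (hXm : Measurable X)
    (j : ι) {k : ℕ} (hk : k ≤ Fintype.card ι) :
    (k : ℝ≥0∞) / Fintype.card ι ≤ P {ω | rank (X ω) j < k} := by
  have hsum := nat_mul_measure_univ_le_sum_measure P (E := fun i => {ω | rank (X ω) i < k})
    (fun i => hXm (measurableSet_rank_lt i k)) fun ω => le_card_rank_lt (X ω) hk
  simp_rw [measure_univ, mul_one, hX.measure_rank_lt_eq hXm k _ j, sum_const, card_univ,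
    nsmul_eq_mul] at hsum
  exact ENNReal.div_le_of_le_mul' hsum

end Exchangeable

theorem conformal_coverage_of_exchangeable_general
    {Ω : Type*} [MeasurableSpace Ω] (P : Measure Ω) [IsProbabilityMeasure P]
    (N : ℕ) (s : Fin (N + 1) → Ω → ℝ)
    (hmeas : ∀ i, Measurable (s i))
    (hexch : ∀ σ : Equiv.Perm (Fin (N + 1)),
      Measure.map (fun ω => (fun i => s (σ i) ω)) P
        = Measure.map (fun ω => (fun i => s i ω)) P)
    (α : ℝ) (hα : α ∈ Set.Ioo (0 : ℝ) 1)
    (k : ℕ) (hk : k = ⌈(1 - α) * (N + 1 : ℝ)⌉₊) (hkN : k ≤ N) :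
    ENNReal.ofReal (1 - α)
      ≤ P {ω | s (Fin.last N) ω ≤ kthSmallest (fun i : Fin N => s i.castSucc ω) k} := by
  have hk₁ : 1 ≤ k := hk ▸ Nat.ceil_pos.2 (mul_pos (sub_pos.2 hα.2) (by positivity))
  have hevent : {ω | s (Fin.last N) ω ≤ kthSmallest (fun i : Fin N => s i.castSucc ω) k}
      = {ω | rank (fun i => s i ω) (Fin.last N) < k} := by
    ext ω
    show s (Fin.last N) ω ≤ _ ↔ rank _ _ < k
    rw [le_kthSmallest_iff _ hk₁ hkN, rank_last]
  have hX : Exchangeable P fun ω i => s i ω := hexch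
  have hcoverage := hX.natCast_div_card_le_measure_rank_lt (measurable_pi_lambda _ hmeas)
    (Fin.last N) (k := k) (by rw [Fintype.card_fin]; omega)
  rw [Fintype.card_fin, ← hevent] at hcoverage
  calc ENNReal.ofReal (1 - α) ≤ k / (N + 1 : ℕ) :=
        ENNReal.ofReal_le_natCast_div N.succ_ne_zero (by rw [hk]; exact_mod_cast Nat.le_ceil _)
    _ ≤ _ := hcoverage

/-- **Finite-sample conformal coverage from exchangeability.** If `s₁, …, s_{N+1}` are
exchangeable real random variables, `k = ⌈(1−α)(N+1)⌉ ≤ N`, and `q` is the `k`-th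
smallest value among `s₁, …, s_N`, then `P(s_{N+1} ≤ q) ≥ 1 − α`. -/
theorem conformal_coverage_of_exchangeable
    {Ω : Type*} [MeasurableSpace Ω] (P : Measure Ω) [IsProbabilityMeasure P]
    (N : ℕ) (hN : 1 ≤ N) (s : Fin (N + 1) → Ω → ℝ)
    (hmeas : ∀ i, Measurable (s i))
    (hexch : ∀ σ : Equiv.Perm (Fin (N + 1)),
      Measure.map (fun ω => (fun i => s (σ i) ω)) P
        = Measure.map (fun ω => (fun i => s i ω)) P)
    (α : ℝ) (hα : α ∈ Set.Ioo (0 : ℝ) 1)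
    (k : ℕ) (hk : k = ⌈(1 - α) * (N + 1 : ℝ)⌉₊) (hkN : k ≤ N) :
    ENNReal.ofReal (1 - α)
      ≤ P {ω | s (Fin.last N) ω ≤ kthSmallest (fun i : Fin N => s i.castSucc ω) k} :=
  conformal_coverage_of_exchangeable_general P N s hmeas hexch α hα k hk hkN
end
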